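/- arXiv:1911.07193 — 3 statements merged into one kernel-verified Lean document; each statement's English description precedes it below -/
import Mathlib

section
/- Let C be a 2-Calabi–Yau triangulated category and let L, N be indecomposable rigid objects with dim_k Hom_C(N, ΣL) = 1. Given a triangle L → M → N →^h ΣL with h ≠ 0, we have Hom_C(M, ΣL) = 0 and, by 2-Calabi–Yau duality, Hom_C(L, ΣM) = 0. -/
open CategoryTheory Limits Pretriangulated

universe v u

/-!
Rigidity of `L` makes `f ≫ φ` vanish for every `φ : M ⟶ ΣL`, so `φ` factors through `g` as
`g ≫ ψ`. Since `h` spans the line `Hom(N, ΣL)`, `ψ` is a multiple of `h`, and `g ≫ h = 0` gives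
`φ = 0`. Shifting, `Hom(ΣM, Σ²L) = 0`, and 2-Calabi–Yau duality turns this into `Hom(L, ΣM) = 0`.
-/

namespace CategoryTheory

lemma subsingleton_hom_shift_of_subsingleton {C : Type*} [Category C] [HasShift C ℤ]
    {X Y : C} {b : ℤ} [Subsingleton (X ⟶ Y⟦b⟧)] (a c : ℤ) (hc : b + a = c) :
    Subsingleton (X⟦a⟧ ⟶ Y⟦c⟧) :=
  ((Functor.FullyFaithful.ofFullyFaithful (shiftFunctor C a)).homEquiv.trans
    (Iso.homCongr (Iso.refl _) ((shiftFunctorAdd' C b a c hc).app Y).symm)).symm.subsingleton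

namespace Pretriangulated

variable {k : Type*} [Field k] {C : Type*} [Category C] [Preadditive C] [Linear k C]
  [HasZeroObject C] [HasShift C ℤ] [∀ n : ℤ, (CategoryTheory.shiftFunctor C n).Additive]
  [Pretriangulated C]

lemma Triangle.hom_obj₂_eq_zero_of_finrank_eq_one {T : Triangle C} (hT : T ∈ distTriang C)
    (h₁ : ∀ φ : T.obj₁ ⟶ T.obj₁⟦(1 : ℤ)⟧, φ = 0)
    (h₃ : Module.finrank k (T.obj₃ ⟶ T.obj₁⟦(1 : ℤ)⟧) = 1) (hmor₃ : T.mor₃ ≠ 0)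
    (φ : T.obj₂ ⟶ T.obj₁⟦(1 : ℤ)⟧) : φ = 0 := by
  obtain ⟨ψ, rfl⟩ := yoneda_exact₂ T hT φ (h₁ _)
  obtain ⟨c, rfl⟩ := (finrank_eq_one_iff_of_nonzero' _ hmor₃).mp h₃ ψ
  rw [Linear.comp_smul, comp_distTriang_mor_zero₂₃ T hT, smul_zero]

end Pretriangulated

end CategoryTheory

/-- Let `C` be a `k`-linear Hom-finite 2-Calabi–Yau pretriangulated category
(2-CY encoded by the dimension duality `dim Hom(X,Y) = dim Hom(Y, Σ²X)`), and let
`L, N` be indecomposable rigid objects with `dim_k Hom_C(N, ΣL) = 1`.  Given a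
distinguished triangle `L → M → N →ʰ ΣL` with `h ≠ 0`, we have
`Hom_C(M, ΣL) = 0` and, by 2-Calabi–Yau duality, `Hom_C(L, ΣM) = 0`. -/
theorem hom_vanishing_from_exchange_triangle
    {k : Type u} [Field k] (C : Type u) [Category.{v} C] [Preadditive C]
    [Linear k C] [HasZeroObject C] [HasShift C ℤ]
    [∀ n : ℤ, (CategoryTheory.shiftFunctor C n).Additive] [Pretriangulated C]
    (homFin : ∀ X Y : C, FiniteDimensional k (X ⟶ Y))
    (CY2 : ∀ X Y : C, Module.finrank k (X ⟶ Y) = Module.finrank k (Y ⟶ X⟦(2 : ℤ)⟧))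
    (L M N : C)
    (hLrigid : ∀ f : L ⟶ L⟦(1 : ℤ)⟧, f = 0)
    (hNrigid : ∀ f : N ⟶ N⟦(1 : ℤ)⟧, f = 0)
    (hdim : Module.finrank k (N ⟶ L⟦(1 : ℤ)⟧) = 1)
    (f : L ⟶ M) (g : M ⟶ N) (h : N ⟶ L⟦(1 : ℤ)⟧)
    (htri : Triangle.mk f g h ∈ distTriang C)
    (hne : h ≠ 0) :
    (∀ φ : M ⟶ L⟦(1 : ℤ)⟧, φ = 0) ∧ (∀ φ : L ⟶ M⟦(1 : ℤ)⟧, φ = 0) := by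
  have hM : ∀ φ : M ⟶ L⟦(1 : ℤ)⟧, φ = 0 :=
    Triangle.hom_obj₂_eq_zero_of_finrank_eq_one htri hLrigid hdim hne
  have : Subsingleton (M ⟶ L⟦(1 : ℤ)⟧) := (subsingleton_iff_forall_eq 0).mpr hM
  have hshift : Subsingleton (M⟦(1 : ℤ)⟧ ⟶ L⟦(2 : ℤ)⟧) :=
    subsingleton_hom_shift_of_subsingleton (b := 1) 1 2 (by norm_num)
  have hLM : Module.finrank k (L ⟶ M⟦(1 : ℤ)⟧) = 0 := by
    rw [CY2, Module.finrank_zero_iff]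
    exact hshift
  exact ⟨hM, finrank_zero_iff_forall_zero.mp hLM⟩
end

section
/- Let B be an n×n skew-symmetrizable integer matrix with skew-symmetrizer S (positive integer diagonal, SB skew-symmetric). For every vertex t of the n-regular tree, the F-matrices satisfy F_t^{B;t_0} = S^{-1} · F_t^{-B^T;t_0} · S, given that the C-matrices satisfy C_t^{B;t_0} = S^{-1} C_t^{-B^T;t_0} S and the exchange matrices satisfy B_t = S^{-1}(-B_t^T)S for all t, and the F-matrices satisfy the mutation recursion F_{t'} = F_t J_ℓ + max([C_t]_+^{•ℓ} + F_t[B_t]_+^{•ℓ}, [-C_t]_+^{•ℓ} + F_t[-B_t]_+^{•ℓ}) along an edge t —ℓ— t' with initial condition F_{t_0} = 0. -/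
open Matrix

/-- `J_ℓ`: the identity matrix with the `(ℓ,ℓ)` entry replaced by `-1`. -/
def Jmat {n : ℕ} (ℓ : Fin n) : Matrix (Fin n) (Fin n) ℚ :=
  fun i j => if i = j then (if i = ℓ then -1 else 1) else 0

/-- Entrywise positive part `[A]₊`. -/
def posP {n : ℕ} (A : Matrix (Fin n) (Fin n) ℚ) : Matrix (Fin n) (Fin n) ℚ :=
  fun i j => max (A i j) 0

/-- `A^{•ℓ}`: replace all columns except the `ℓ`-th by zero. -/
def colR {n : ℕ} (ℓ : Fin n) (A : Matrix (Fin n) (Fin n) ℚ) : Matrix (Fin n) (Fin n) ℚ :=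
  fun i j => if j = ℓ then A i j else 0

/-- Entrywise max of matrices. -/
def mmax {n : ℕ} (A B : Matrix (Fin n) (Fin n) ℚ) : Matrix (Fin n) (Fin n) ℚ :=
  fun i j => max (A i j) (B i j)

/- Conjugation by a positive diagonal matrix `S` multiplies the entry `(i, j)` by the positive
scalar `(S i i)⁻¹ * S j j`. It is therefore a ring automorphism that commutes with the entrywise
operations `[·]₊`, `·^{•ℓ}` and `max`, and fixes the diagonal matrix `J_ℓ`; hence it maps the
mutation recursion for `F'` onto the one for `F`, and the claim follows along each path from the
root. -/

section Conjugation

variable {ι : Type*} [Fintype ι] [DecidableEq ι]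

section CommRing

variable {R : Type*} [CommRing R]

theorem Matrix.inv_mul_mul_mul_inv_mul_mul {S : Matrix ι ι R} (hS : IsUnit S.det)
    (A B : Matrix ι ι R) : S⁻¹ * A * S * (S⁻¹ * B * S) = S⁻¹ * (A * B) * S := by
  simp only [Matrix.mul_assoc, mul_nonsing_inv_cancel_left _ _ hS]

theorem Matrix.inv_mul_mul_add_inv_mul_mul (S A B : Matrix ι ι R) :
    S⁻¹ * A * S + S⁻¹ * B * S = S⁻¹ * (A + B) * S := by
  rw [Matrix.mul_add, Matrix.add_mul]

theorem Matrix.neg_inv_mul_mul (S A : Matrix ι ι R) : -(S⁻¹ * A * S) = S⁻¹ * (-A) * S := by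
  rw [Matrix.mul_neg, Matrix.neg_mul]

end CommRing

variable {K : Type*} [Field K]

theorem Matrix.inv_diagonal_of_ne_zero {d : ι → K} (hd : ∀ i, d i ≠ 0) :
    (diagonal d)⁻¹ = diagonal d⁻¹ :=
  inv_eq_left_inv <| by
    rw [diagonal_mul_diagonal, ← diagonal_one]
    exact congrArg diagonal (funext fun i => inv_mul_cancel₀ (hd i))

theorem Matrix.IsDiag.inv_mul_mul_apply {S : Matrix ι ι K} (hS : S.IsDiag) (hS0 : ∀ i, S i i ≠ 0)
    (A : Matrix ι ι K) (i j : ι) : (S⁻¹ * A * S) i j = (S i i)⁻¹ * A i j * S j j := by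
  conv_lhs =>
    rw [← hS.diagonal_diag, inv_diagonal_of_ne_zero (d := S.diag) hS0, mul_diagonal, diagonal_mul]
  rfl

end Conjugation

def fMatrixMutation {n : ℕ} (ℓ : Fin n) (C B F : Matrix (Fin n) (Fin n) ℚ) :
    Matrix (Fin n) (Fin n) ℚ :=
  F * Jmat ℓ + mmax (colR ℓ (posP C) + F * colR ℓ (posP B))
    (colR ℓ (posP (-C)) + F * colR ℓ (posP (-B)))

namespace PositiveDiagonalConjugation

variable {n : ℕ} {S : Matrix (Fin n) (Fin n) ℚ} (hS : S.IsDiag) (hpos : ∀ i, 0 < S i i)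
include hS hpos

theorem isUnit_det : IsUnit S.det := by
  rw [← hS.diagonal_diag, det_diagonal]
  exact (Finset.prod_pos fun i _ => hpos i).ne'.isUnit

theorem conj_apply (A : Matrix (Fin n) (Fin n) ℚ) (i j : Fin n) :
    (S⁻¹ * A * S) i j = (S i i)⁻¹ * A i j * S j j :=
  hS.inv_mul_mul_apply (fun i => (hpos i).ne') A i j

theorem conj_max_apply (A B : Matrix (Fin n) (Fin n) ℚ) (i j : Fin n) :
    (S i i)⁻¹ * max (A i j) (B i j) * S j j = max ((S⁻¹ * A * S) i j) ((S⁻¹ * B * S) i j) := by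
  rw [conj_apply hS hpos, conj_apply hS hpos, mul_max_of_nonneg _ _ (inv_pos.2 (hpos i)).le,
    max_mul_of_nonneg _ _ (hpos j).le]

theorem posP_conj (A : Matrix (Fin n) (Fin n) ℚ) : posP (S⁻¹ * A * S) = S⁻¹ * posP A * S := by
  ext i j
  rw [conj_apply hS hpos, posP, posP]
  simpa using (conj_max_apply hS hpos A 0 i j).symm

theorem mmax_conj (A B : Matrix (Fin n) (Fin n) ℚ) :
    mmax (S⁻¹ * A * S) (S⁻¹ * B * S) = S⁻¹ * mmax A B * S := by
  ext i j
  rw [conj_apply hS hpos]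
  exact (conj_max_apply hS hpos A B i j).symm

theorem colR_conj (ℓ : Fin n) (A : Matrix (Fin n) (Fin n) ℚ) :
    colR ℓ (S⁻¹ * A * S) = S⁻¹ * colR ℓ A * S := by
  ext i j
  rw [conj_apply hS hpos, colR, colR, conj_apply hS hpos]
  split_ifs <;> simp

theorem conj_Jmat (ℓ : Fin n) : S⁻¹ * Jmat ℓ * S = Jmat ℓ := by
  ext i j
  simp only [conj_apply hS hpos, Jmat]
  split_ifs with hij <;> simp [hij, (hpos j).ne']

theorem fMatrixMutation_conj (ℓ : Fin n) (C B F : Matrix (Fin n) (Fin n) ℚ) :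
    fMatrixMutation ℓ (S⁻¹ * C * S) (S⁻¹ * B * S) (S⁻¹ * F * S) =
      S⁻¹ * fMatrixMutation ℓ C B F * S := by
  have hJ : S⁻¹ * F * S * Jmat ℓ = S⁻¹ * (F * Jmat ℓ) * S := by
    conv_lhs => rw [← conj_Jmat hS hpos ℓ]
    exact inv_mul_mul_mul_inv_mul_mul (isUnit_det hS hpos) F (Jmat ℓ)
  simp only [fMatrixMutation, neg_inv_mul_mul, posP_conj hS hpos, colR_conj hS hpos,
    inv_mul_mul_mul_inv_mul_mul (isUnit_det hS hpos), hJ, inv_mul_mul_add_inv_mul_mul,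
    mmax_conj hS hpos]

end PositiveDiagonalConjugation

/-- Vertices of the `n`-regular tree are modelled by mutation sequences `List (Fin n)` read from
the root `[]`; `F'` plays the role of `F^{-Bᵀ;t₀}`. -/
theorem Fmatrix_skew_symmetrizer_conjugation {n : ℕ}
    (S : Matrix (Fin n) (Fin n) ℚ)
    (hSdiag : ∀ i j, i ≠ j → S i j = 0) (hSpos : ∀ i, 0 < S i i)
    (Bm Bm' Cm Cm' F F' : List (Fin n) → Matrix (Fin n) (Fin n) ℚ)
    (hBdual : ∀ t, Bm' t = -(Bm t)ᵀ)
    (hBconj : ∀ t, Bm t = S⁻¹ * (-(Bm t)ᵀ) * S)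
    (hCconj : ∀ t, Cm t = S⁻¹ * Cm' t * S)
    (hF0 : F [] = 0) (hF'0 : F' [] = 0)
    (hFrec : ∀ (t : List (Fin n)) (ℓ : Fin n),
      F (ℓ :: t) = F t * Jmat ℓ +
        mmax (colR ℓ (posP (Cm t)) + F t * colR ℓ (posP (Bm t)))
             (colR ℓ (posP (-(Cm t))) + F t * colR ℓ (posP (-(Bm t)))))
    (hF'rec : ∀ (t : List (Fin n)) (ℓ : Fin n),
      F' (ℓ :: t) = F' t * Jmat ℓ +
        mmax (colR ℓ (posP (Cm' t)) + F' t * colR ℓ (posP (Bm' t)))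
             (colR ℓ (posP (-(Cm' t))) + F' t * colR ℓ (posP (-(Bm' t))))) :
    ∀ t : List (Fin n), F t = S⁻¹ * F' t * S := by
  have hS : S.IsDiag := fun i j hij => hSdiag i j hij
  intro t
  induction t with
  | nil => simp [hF0, hF'0]
  | cons ℓ t ih =>
    have hB : Bm t = S⁻¹ * Bm' t * S := by rw [hBconj t, ← hBdual t]
    calc F (ℓ :: t) = fMatrixMutation ℓ (Cm t) (Bm t) (F t) := hFrec t ℓ
      _ = fMatrixMutation ℓ (S⁻¹ * Cm' t * S) (S⁻¹ * Bm' t * S) (S⁻¹ * F' t * S) := by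
        rw [hCconj, hB, ih]
      _ = S⁻¹ * F' (ℓ :: t) * S := by
        rw [PositiveDiagonalConjugation.fMatrixMutation_conj hS hSpos, hF'rec]
        rfl
end

section
/- Compatibility degree symmetry for skew-symmetrizable type: let x = x_{i;t} and x' = x_{j;t'} be cluster variables of a cluster algebra with skew-symmetrizer S = diag(s_1,...,s_n). Assuming the F-matrix identities F_{t'}^{B_t;t} = (F_t^{-B_{t'}^T;t'})^T (self-duality combined with F^{-B} = F^{B}) and F_t^{B;t_0} = S^{-1} F_t^{-B^T;t_0} S, the compatibility degrees satisfy s_i · (x ∥ x') = s_j · (x' ∥ x), where (x ∥ x') = f_{ij;t'}^{B_t;t} is the (i,j) entry of the F-matrix. In particular (x ∥ x') = 0 if and only if (x' ∥ x) = 0. -/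
open Matrix

/-- Compatibility degree symmetry for skew-symmetrizable type, at the level of
`F`-matrices.  If `S = diag(s₁,…,sₙ)` is a positive diagonal matrix and the
`F`-matrices satisfy `F' = S⁻¹ Fᵀ S` (which follows from the self-duality
`F_{t'}^{B_t;t} = (F_t^{-B_{t'}ᵀ;t'})ᵀ` together with `F_t^{B;t₀} = S⁻¹ F_t^{-Bᵀ;t₀} S`),
then the compatibility degrees `(x ∥ x') = F'ᵢⱼ` and `(x' ∥ x) = Fⱼᵢ` satisfy
`sᵢ · (x ∥ x') = sⱼ · (x' ∥ x)`; in particular `(x ∥ x') = 0 ↔ (x' ∥ x) = 0`. -/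
theorem compatibility_degree_symmetry {n : ℕ}
    (S F F' : Matrix (Fin n) (Fin n) ℚ)
    (hSdiag : ∀ i j, i ≠ j → S i j = 0) (hSpos : ∀ i, 0 < S i i)
    (h : F' = S⁻¹ * Fᵀ * S) :
    ∀ i j : Fin n, S i i * F' i j = S j j * F j i ∧ (F' i j = 0 ↔ F j i = 0) := by
  have hS : S = Matrix.diagonal (fun i => S i i) := by
    ext i j
    by_cases hij : i = j
    · subst hij; simp
    · simp [Matrix.diagonal_apply_ne _ hij, hSdiag i j hij]
  have hSinv : S⁻¹ = Matrix.diagonal (fun i => (S i i)⁻¹) := by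
    apply inv_eq_right_inv
    ext i j
    by_cases hij : i = j
    · subst hij
      simp [Matrix.mul_apply, Matrix.diagonal_apply, Finset.sum_ite_eq,
        mul_inv_cancel₀ (hSpos i).ne', hSdiag]
    · simp [Matrix.mul_apply, Matrix.diagonal_apply, Matrix.one_apply_ne hij]
      exact Or.inl (hSdiag i j hij)
  have hentry : ∀ i j, F' i j = (S i i)⁻¹ * F j i * S j j := by
    intro i j
    rw [h, hSinv]
    nth_rewrite 2 [hS]
    simp [Matrix.diagonal_mul, Matrix.mul_diagonal, Matrix.transpose_apply]
    try ring
  intro i j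
  have hi := (hSpos i).ne'
  have hj := (hSpos j).ne'
  constructor
  · rw [hentry i j]; field_simp
  · rw [hentry i j]
    constructor
    · intro hz
      rcases mul_eq_zero.mp hz with hz | hz
      · rcases mul_eq_zero.mp hz with hz | hz
        · exact absurd hz (inv_ne_zero hi)
        · exact hz
      · exact absurd hz hj
    · intro hz; rw [hz]; ring
end
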